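/- For every n ≥ 0, the number of permutations of {1,…,n} avoiding the pattern 132 equals the n-th Catalan number. -/

import Mathlib

/-- A Dyck word of semilength `n`, as a list of booleans read left to right,
where `true` is an up-step `U` and `false` is a down-step `D`:
exactly `n` of each letter, and every prefix has at least as many `U`'s as `D`'s. -/
def IsDyckWord (n : ℕ) (w : List Bool) : Prop :=
  w.count true = n ∧ w.count false = n ∧
    ∀ k : ℕ, (w.take k).count false ≤ (w.take k).count true

/-- The number of peaks of a word: positions where a `U` is immediately followed by a `D`. -/
def numPeaks (w : List Bool) : ℕ := (w.zip w.tail).count (true, false)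

/-- The word `U^a D^b`. -/
def upDown (a b : ℕ) : List Bool :=
  List.replicate a true ++ List.replicate b false

/-- A permutation `π` of `{0, …, n-1}` contains the pattern `σ` (a permutation of
`{0, …, m-1}`) if some subsequence of values of `π` is in the same relative order as `σ`. -/
def ContainsPattern {n m : ℕ} (π : Equiv.Perm (Fin n)) (σ : Equiv.Perm (Fin m)) : Prop :=
  ∃ f : Fin m → Fin n, StrictMono f ∧ ∀ a b : Fin m, π (f a) < π (f b) ↔ σ a < σ b

/-- A permutation avoids a pattern if it does not contain it. -/
def AvoidsPattern {n m : ℕ} (π : Equiv.Perm (Fin n)) (σ : Equiv.Perm (Fin m)) : Prop :=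
  ¬ ContainsPattern π σ

/-- The pattern 132 (0-indexed: 021). -/
def pat132 : Equiv.Perm (Fin 3) where
  toFun := ![0, 2, 1]
  invFun := ![0, 2, 1]
  left_inv := by intro x; fin_cases x <;> rfl
  right_inv := by intro x; fin_cases x <;> rfl

/-- The pattern 321 (0-indexed: 210). -/
def pat321 : Equiv.Perm (Fin 3) where
  toFun := ![2, 1, 0]
  invFun := ![2, 1, 0]
  left_inv := by intro x; fin_cases x <;> rfl
  right_inv := by intro x; fin_cases x <;> rfl

/-- The pattern 4321 (0-indexed: 3210). -/
def pat4321 : Equiv.Perm (Fin 4) where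
  toFun := ![3, 2, 1, 0]
  invFun := ![3, 2, 1, 0]
  left_inv := by intro x; fin_cases x <;> rfl
  right_inv := by intro x; fin_cases x <;> rfl

/-- The pattern 4231 (0-indexed: 3120). -/
def pat4231 : Equiv.Perm (Fin 4) where
  toFun := ![3, 1, 2, 0]
  invFun := ![3, 1, 2, 0]
  left_inv := by intro x; fin_cases x <;> rfl
  right_inv := by intro x; fin_cases x <;> rfl

/-- The strictly decreasing pattern `(k+1)k⋯21` of length `k+1`. -/
def patDesc (k : ℕ) : Equiv.Perm (Fin (k+1)) where
  toFun := Fin.rev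
  invFun := Fin.rev
  left_inv := Fin.rev_rev
  right_inv := Fin.rev_rev

/-- `w` has exactly three peaks and, in its (unique) decomposition
`U^{a₁}D^{b₁}U^{a₂}D^{b₂}U^{a₃}D^{b₃}` with all exponents positive,
`a₂ = 1` or `b₂ = 1`. -/
def ThreePeakMiddleOne (w : List Bool) : Prop :=
  numPeaks w = 3 ∧ ∃ a₁ b₁ a₂ b₂ a₃ b₃ : ℕ,
    0 < a₁ ∧ 0 < b₁ ∧ 0 < a₂ ∧ 0 < b₂ ∧ 0 < a₃ ∧ 0 < b₃ ∧
    w = upDown a₁ b₁ ++ upDown a₂ b₂ ++ upDown a₃ b₃ ∧ (a₂ = 1 ∨ b₂ = 1)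

/-- `i` is (the position of) a left-to-right minimum of `π`. -/
def IsLtrMin {n : ℕ} (π : Equiv.Perm (Fin n)) (i : Fin n) : Prop :=
  ∀ j : Fin n, j < i → π i < π j

/-!
If a permutation of `{0, …, n}` avoids `132` and has its maximum `n` at position `k`, every entry
left of `n` exceeds every entry right of it (else the two with `n` form a `132`). So it is
`σ n τ` with `σ` a `132`-avoiding permutation of the top `k` values below `n` and `τ` one of the
`n - k` smallest values; conversely any such `σ n τ` avoids `132`, since an occurrence can neither
use `n` nor straddle it. The counts therefore satisfy the Catalan recurrence
`C (n + 1) = ∑ k, C k * C (n - k)`.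
-/

open Equiv Function

theorem containsPattern_pat132_iff {n : ℕ} (π : Perm (Fin n)) :
    ContainsPattern π pat132 ↔ ∃ i j k : Fin n, i < j ∧ j < k ∧ π i < π k ∧ π k < π j := by
  constructor
  · rintro ⟨f, hf, hval⟩
    exact ⟨f 0, f 1, f 2, hf (by decide), hf (by decide),
      (hval 0 2).2 (by decide), (hval 2 1).2 (by decide)⟩
  · rintro ⟨i, j, k, hij, hjk, hik, hkj⟩
    refine ⟨![i, j, k], Fin.strictMono_iff_lt_succ.2 fun a => ?_, fun a b => ?_⟩
    · fin_cases a
      exacts [hij, hjk]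
    · have hij' : π i < π j := hik.trans hkj
      fin_cases a <;> fin_cases b <;> simp [pat132] <;> omega

theorem AvoidsPattern.of_strictMono_comp {k n m : ℕ} {σ : Perm (Fin k)} {π : Perm (Fin n)}
    {ρ : Perm (Fin m)} {e f : Fin k → Fin n} (he : StrictMono e) (hf : StrictMono f)
    (hπ : ∀ a, π (e a) = f (σ a)) (h : AvoidsPattern π ρ) : AvoidsPattern σ ρ := by
  rintro ⟨g, hg, hgρ⟩
  refine h ⟨e ∘ g, he.comp hg, fun a b => ?_⟩
  simp only [comp_apply, hπ, hf.lt_iff_lt, hgρ]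

theorem avoidsPattern_of_lt {n m : ℕ} (π : Perm (Fin n)) (σ : Perm (Fin m)) (h : n < m) :
    AvoidsPattern π σ := fun ⟨f, hf, _⟩ =>
  h.not_ge (by simpa using Fintype.card_le_of_injective f hf.injective)

noncomputable def inducedPerm {α β : Type*} [Finite α] (π : Perm β) {e f : α → β}
    (he : Injective e) (hf : Injective f) (h : ∀ a, π (e a) ∈ Set.range f) : Perm α :=
  Equiv.ofBijective (fun a => (Equiv.ofInjective f hf).symm ⟨π (e a), h a⟩) <|
    Finite.injective_iff_bijective.mp fun a b hab => by
      have hπe : π (e a) = π (e b) := by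
        simpa only [Equiv.apply_ofInjective_symm, Subtype.mk.injEq] using congrArg f hab
      exact he (π.injective hπe)

theorem apply_inducedPerm {α β : Type*} [Finite α] (π : Perm β) {e f : α → β}
    (he : Injective e) (hf : Injective f) (h : ∀ a, π (e a) ∈ Set.range f) (a : α) :
    f (inducedPerm π he hf h a) = π (e a) :=
  Equiv.apply_ofInjective_symm hf _

section Glue

variable {n : ℕ} (k : Fin (n + 1))

/-! In a `132`-avoiding permutation with `n` at position `k`, the `k` positions left of `k` carry
the `k` values just below `n` and the positions right of `k` the `n - k` smallest values. -/

def leftPos (a : Fin k) : Fin (n + 1) := ⟨a, a.2.trans k.2⟩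

def rightPos (b : Fin (n - k)) : Fin (n + 1) := ⟨k + 1 + b, by omega⟩

def highVal (a : Fin k) : Fin (n + 1) := ⟨n - k + a, by omega⟩

def lowVal (b : Fin (n - k)) : Fin (n + 1) := ⟨b, by omega⟩

theorem leftPos_strictMono : StrictMono (leftPos k) := fun _ _ h => h

theorem rightPos_strictMono : StrictMono (rightPos k) := fun a b h => by
  simp only [rightPos, Fin.mk_lt_mk]; omega

theorem highVal_strictMono : StrictMono (highVal k) := fun a b h => by
  simp only [highVal, Fin.mk_lt_mk]; omega

theorem lowVal_strictMono : StrictMono (lowVal k) := fun _ _ h => h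

theorem exists_leftPos_eq {i : Fin (n + 1)} (h : i < k) : ∃ a, leftPos k a = i :=
  ⟨⟨i, h⟩, rfl⟩

theorem exists_rightPos_eq {i : Fin (n + 1)} (h : k < i) : ∃ b, rightPos k b = i :=
  ⟨⟨i - (k + 1), by omega⟩, Fin.ext (by simp only [rightPos]; omega)⟩

theorem exists_leftPos_eq_or_eq_or_exists_rightPos_eq (i : Fin (n + 1)) :
    (∃ a, leftPos k a = i) ∨ k = i ∨ ∃ b, rightPos k b = i := by
  rcases lt_trichotomy i k with h | h | h
  · exact .inl (exists_leftPos_eq k h)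
  · exact .inr (.inl h.symm)
  · exact .inr (.inr (exists_rightPos_eq k h))

theorem lowVal_lt_highVal (a : Fin k) (b : Fin (n - k)) : lowVal k b < highVal k a := by
  simp only [lowVal, highVal, Fin.mk_lt_mk]; omega

theorem highVal_lt_last (a : Fin k) : highVal k a < Fin.last n := by
  simp only [highVal, Fin.lt_def, Fin.val_last]; omega

theorem lowVal_lt_last (b : Fin (n - k)) : lowVal k b < Fin.last n := by
  simp only [lowVal, Fin.lt_def, Fin.val_last]; omega

variable (σ : Perm (Fin k)) (τ : Perm (Fin (n - k)))

def glueFun (i : Fin (n + 1)) : Fin (n + 1) :=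
  if h : (i : ℕ) < k then highVal k (σ ⟨i, h⟩)
  else if h' : (i : ℕ) = k then Fin.last n
  else lowVal k (τ ⟨i - (k + 1), by omega⟩)

theorem glueFun_leftPos (a : Fin k) : glueFun k σ τ (leftPos k a) = highVal k (σ a) := by
  simp [glueFun, leftPos]

theorem glueFun_self : glueFun k σ τ k = Fin.last n := by
  simp [glueFun]

theorem glueFun_rightPos (b : Fin (n - k)) : glueFun k σ τ (rightPos k b) = lowVal k (τ b) := by
  simp [glueFun, rightPos, show ¬ (k : ℕ) + 1 + b < k by omega, show (k : ℕ) + 1 + b ≠ k by omega]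

theorem glueFun_injective : Injective (glueFun k σ τ) := by
  intro i j hij
  obtain ⟨a, rfl⟩ | rfl | ⟨b, rfl⟩ := exists_leftPos_eq_or_eq_or_exists_rightPos_eq k i <;>
  obtain ⟨a', rfl⟩ | rfl | ⟨b', rfl⟩ := exists_leftPos_eq_or_eq_or_exists_rightPos_eq k j <;>
  simp only [glueFun_leftPos, glueFun_self, glueFun_rightPos,
    (highVal_strictMono k).injective.eq_iff, (lowVal_strictMono k).injective.eq_iff,
    EmbeddingLike.apply_eq_iff_eq] at hij
  all_goals first
    | rw [hij]
    | rfl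
    | simp only [(lowVal_lt_highVal k _ _).ne, (lowVal_lt_highVal k _ _).ne',
        (highVal_lt_last k _).ne, (highVal_lt_last k _).ne', (lowVal_lt_last k _).ne,
        (lowVal_lt_last k _).ne'] at hij

/-- The permutation `σ n τ`, with `σ` shifted above the values of `τ`. -/
noncomputable def glue : Perm (Fin (n + 1)) :=
  Equiv.ofBijective _ (Finite.injective_iff_bijective.mp (glueFun_injective k σ τ))

theorem glue_leftPos (a : Fin k) : glue k σ τ (leftPos k a) = highVal k (σ a) :=
  glueFun_leftPos k σ τ a

theorem glue_self : glue k σ τ k = Fin.last n :=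
  glueFun_self k σ τ

theorem glue_rightPos (b : Fin (n - k)) : glue k σ τ (rightPos k b) = lowVal k (τ b) :=
  glueFun_rightPos k σ τ b

theorem sub_le_glue {i : Fin (n + 1)} (h : i < k) : n - k ≤ (glue k σ τ i : ℕ) := by
  obtain ⟨a, rfl⟩ := exists_leftPos_eq k h
  rw [glue_leftPos]
  exact Nat.le_add_right _ _

theorem glue_lt_sub {i : Fin (n + 1)} (h : k < i) : (glue k σ τ i : ℕ) < n - k := by
  obtain ⟨b, rfl⟩ := exists_rightPos_eq k h
  rw [glue_rightPos]
  exact (τ b).2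

/-- A `132` of `σ n τ` cannot use the maximum nor straddle it, so it is a `132` of `σ` or of `τ`. -/
theorem avoidsPattern_glue (hσ : AvoidsPattern σ pat132) (hτ : AvoidsPattern τ pat132) :
    AvoidsPattern (glue k σ τ) pat132 := by
  rw [AvoidsPattern, containsPattern_pat132_iff]
  rintro ⟨i, j, l, hij, hjl, hil, hlj⟩
  have hlk : l ≠ k := by
    rintro hl
    rw [hl, glue_self] at hlj
    exact hlj.not_ge (Fin.le_last _)
  have hik : i ≠ k := by
    rintro hi
    rw [hi, glue_self] at hil
    exact hil.not_ge (Fin.le_last _)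
  rcases lt_or_gt_of_ne hlk with hl | hl
  · obtain ⟨c, rfl⟩ := exists_leftPos_eq k hl
    obtain ⟨b, rfl⟩ := exists_leftPos_eq k (hjl.trans hl)
    obtain ⟨a, rfl⟩ := exists_leftPos_eq k ((hij.trans hjl).trans hl)
    simp only [glue_leftPos, (leftPos_strictMono k).lt_iff_lt,
      (highVal_strictMono k).lt_iff_lt] at hij hjl hil hlj
    exact hσ ((containsPattern_pat132_iff σ).2 ⟨a, b, c, hij, hjl, hil, hlj⟩)
  rcases lt_or_gt_of_ne hik with hi | hi
  · have := sub_le_glue k σ τ hi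
    have := glue_lt_sub k σ τ hl
    exact absurd hil (not_lt.2 (Fin.le_def.2 (by omega)))
  obtain ⟨a, rfl⟩ := exists_rightPos_eq k hi
  obtain ⟨b, rfl⟩ := exists_rightPos_eq k (hi.trans hij)
  obtain ⟨c, rfl⟩ := exists_rightPos_eq k ((hi.trans hij).trans hjl)
  simp only [glue_rightPos, (rightPos_strictMono k).lt_iff_lt,
    (lowVal_strictMono k).lt_iff_lt] at hij hjl hil hlj
  exact hτ ((containsPattern_pat132_iff τ).2 ⟨a, b, c, hij, hjl, hil, hlj⟩)

end Glue

section Decompose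

variable {n : ℕ} {π : Perm (Fin (n + 1))}

def maxPos (π : Perm (Fin (n + 1))) : Fin (n + 1) := π.symm (Fin.last n)

theorem apply_maxPos : π (maxPos π) = Fin.last n := π.apply_symm_apply _

theorem apply_lt_last {i : Fin (n + 1)} (h : i ≠ maxPos π) : π i < Fin.last n :=
  (Fin.le_last _).lt_of_ne fun hi => h (π.injective (hi.trans apply_maxPos.symm))

theorem maxPos_glue (k : Fin (n + 1)) (σ : Perm (Fin k)) (τ : Perm (Fin (n - k))) :
    maxPos (glue k σ τ) = k :=
  (Equiv.symm_apply_eq _).2 (glue_self k σ τ).symm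

variable (hπ : AvoidsPattern π pat132)
include hπ

/-- Otherwise `i, maxPos π, j` would be a `132`. -/
theorem apply_lt_apply_of_lt_maxPos_of_maxPos_lt {i j : Fin (n + 1)} (hi : i < maxPos π)
    (hj : maxPos π < j) : π j < π i := by
  by_contra! h
  refine hπ ((containsPattern_pat132_iff π).2 ⟨i, maxPos π, j, hi, hj, ?_, ?_⟩)
  · exact h.lt_of_ne (π.injective.ne (hi.trans hj).ne)
  · exact apply_maxPos ▸ apply_lt_last hj.ne'

theorem sub_maxPos_le_apply {i : Fin (n + 1)} (hi : i < maxPos π) : n - maxPos π ≤ (π i : ℕ) := by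
  classical
  have hsub : (Finset.Ioi (maxPos π)).image π ⊆ Finset.Iio (π i) := by
    simp only [Finset.image_subset_iff, Finset.mem_Ioi, Finset.mem_Iio]
    exact fun j hj => apply_lt_apply_of_lt_maxPos_of_maxPos_lt hπ hi hj
  have := Finset.card_le_card hsub
  rwa [Finset.card_image_of_injective _ π.injective, Fin.card_Ioi, Fin.card_Iio,
    Nat.add_sub_cancel] at this

theorem apply_lt_sub_maxPos {j : Fin (n + 1)} (hj : maxPos π < j) : (π j : ℕ) < n - maxPos π := by
  classical
  have hsub : (Finset.Iic (maxPos π)).image π ⊆ Finset.Ioi (π j) := by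
    simp only [Finset.image_subset_iff, Finset.mem_Iic, Finset.mem_Ioi]
    intro i hi
    rcases hi.lt_or_eq with hi | rfl
    · exact apply_lt_apply_of_lt_maxPos_of_maxPos_lt hπ hi hj
    · exact apply_maxPos ▸ apply_lt_last hj.ne'
  have := Finset.card_le_card hsub
  rw [Finset.card_image_of_injective _ π.injective, Fin.card_Iic, Fin.card_Ioi] at this
  omega

theorem apply_leftPos_mem_range_highVal (a : Fin (maxPos π)) :
    π (leftPos _ a) ∈ Set.range (highVal (maxPos π)) := by
  have hlow := sub_maxPos_le_apply hπ (i := leftPos _ a) a.2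
  have hhigh := apply_lt_last (π := π) (i := leftPos _ a) (ne_of_lt a.2)
  rw [Fin.lt_def, Fin.val_last] at hhigh
  exact ⟨⟨π (leftPos _ a) - (n - maxPos π), by omega⟩, Fin.ext (by simp only [highVal]; omega)⟩

theorem apply_rightPos_mem_range_lowVal (b : Fin (n - maxPos π)) :
    π (rightPos _ b) ∈ Set.range (lowVal (maxPos π)) := by
  have hb : maxPos π < rightPos _ b := by simp only [rightPos, Fin.lt_def]; omega
  exact ⟨⟨π (rightPos _ b), apply_lt_sub_maxPos hπ hb⟩, rfl⟩

noncomputable def leftPerm : Perm (Fin (maxPos π)) :=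
  inducedPerm π (leftPos_strictMono _).injective (highVal_strictMono _).injective
    (apply_leftPos_mem_range_highVal hπ)

noncomputable def rightPerm : Perm (Fin (n - maxPos π)) :=
  inducedPerm π (rightPos_strictMono _).injective (lowVal_strictMono _).injective
    (apply_rightPos_mem_range_lowVal hπ)

theorem glue_leftPerm_rightPerm : glue (maxPos π) (leftPerm hπ) (rightPerm hπ) = π := by
  ext1 i
  obtain ⟨a, rfl⟩ | rfl | ⟨b, rfl⟩ := exists_leftPos_eq_or_eq_or_exists_rightPos_eq (maxPos π) i
  · exact (glue_leftPos _ _ _ a).trans (apply_inducedPerm ..)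
  · rw [glue_self, apply_maxPos]
  · exact (glue_rightPos _ _ _ b).trans (apply_inducedPerm ..)

theorem avoidsPattern_leftPerm : AvoidsPattern (leftPerm hπ) pat132 :=
  hπ.of_strictMono_comp (leftPos_strictMono _) (highVal_strictMono _)
    fun _ => (apply_inducedPerm ..).symm

theorem avoidsPattern_rightPerm : AvoidsPattern (rightPerm hπ) pat132 :=
  hπ.of_strictMono_comp (rightPos_strictMono _) (lowVal_strictMono _)
    fun _ => (apply_inducedPerm ..).symm

end Decompose

abbrev Av132 (n : ℕ) := {π : Perm (Fin n) // AvoidsPattern π pat132}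

noncomputable def glueAv132 (n : ℕ) :
    (Σ k : Fin (n + 1), Av132 k × Av132 (n - k)) → Av132 (n + 1) :=
  fun x => ⟨glue x.1 x.2.1 x.2.2, avoidsPattern_glue x.1 _ _ x.2.1.2 x.2.2.2⟩

theorem glueAv132_bijective (n : ℕ) : Bijective (glueAv132 n) := by
  constructor
  · rintro ⟨k, σ, τ⟩ ⟨k', σ', τ'⟩ h
    have hg : glue k σ τ = glue k' σ' τ' := congrArg Subtype.val h
    obtain rfl : k = k' := by rw [← maxPos_glue k σ τ, hg, maxPos_glue]
    obtain rfl : σ = σ' := Subtype.ext <| Equiv.ext fun a =>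
      (highVal_strictMono k).injective (by rw [← glue_leftPos, ← glue_leftPos, hg])
    obtain rfl : τ = τ' := Subtype.ext <| Equiv.ext fun b =>
      (lowVal_strictMono k).injective (by rw [← glue_rightPos, ← glue_rightPos, hg])
    rfl
  · rintro ⟨π, hπ⟩
    exact ⟨⟨maxPos π, ⟨leftPerm hπ, avoidsPattern_leftPerm hπ⟩,
      ⟨rightPerm hπ, avoidsPattern_rightPerm hπ⟩⟩, Subtype.ext (glue_leftPerm_rightPerm hπ)⟩

theorem card_av132_succ (n : ℕ) :
    Nat.card (Av132 (n + 1)) =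
      ∑ k : Fin (n + 1), Nat.card (Av132 k) * Nat.card (Av132 (n - k)) := by
  simp only [← Nat.card_eq_of_bijective _ (glueAv132_bijective n), Nat.card_sigma, Nat.card_prod]

theorem card_av132_zero : Nat.card (Av132 0) = 1 :=
  Nat.card_eq_one_iff_unique.2 ⟨inferInstance, ⟨⟨1, avoidsPattern_of_lt _ _ (by decide)⟩⟩⟩

/-- For every `n ≥ 0`, the number of permutations of `{1, …, n}` avoiding the
pattern 132 equals the `n`-th Catalan number. -/
theorem avoid_132_count_eq_catalan (n : ℕ) :
    Nat.card {π : Equiv.Perm (Fin n) // AvoidsPattern π pat132} = catalan n := by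
  induction n using Nat.strongRecOn with
  | ind n ih =>
    cases n with
    | zero => exact card_av132_zero.trans catalan_zero.symm
    | succ m =>
      rw [card_av132_succ, catalan_succ]
      exact Finset.sum_congr rfl fun k _ => by rw [ih k (by omega), ih (m - k) (by omega)]
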